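/- Circular assume-guarantee reasoning in PCL: for all propositional atoms a and b, the formula ((b ↠ a) ∧ (a ↠ b)) → (a ∧ b) is a theorem of PCL, i.e. ⊢ (b ↠ a) ∧ (a ↠ b) → a ∧ b. -/

import Mathlib

namespace Contracts

/-! ### PCL: propositional contract logic -/

inductive PCL (A : Type) : Type where
  | atom (a : A)
  | top
  | bot
  | and (p q : PCL A)
  | or (p q : PCL A)
  | imp (p q : PCL A)
  | cimp (p q : PCL A)    -- contractual implication ↠

namespace PCL

/-- Hilbert-style provability for PCL: intuitionistic propositional logic
extended with the axioms `⊤ ↠ ⊤`, `(p ↠ p) → p` and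
`(p' → p) → (p ↠ q) → (q → q') → (p' ↠ q')`. -/
inductive Proof {A : Type} : Set (PCL A) → PCL A → Prop where
  | ax {Γ : Set (PCL A)} {p} (h : p ∈ Γ) : Proof Γ p
  | mp {Γ} {p q} (h1 : Proof Γ (imp p q)) (h2 : Proof Γ p) : Proof Γ q
  | axK {Γ} {p q} : Proof Γ (imp p (imp q p))
  | axS {Γ} {p q r} : Proof Γ (imp (imp p (imp q r)) (imp (imp p q) (imp p r)))
  | andI {Γ} {p q} : Proof Γ (imp p (imp q (and p q)))
  | andE1 {Γ} {p q} : Proof Γ (imp (and p q) p)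
  | andE2 {Γ} {p q} : Proof Γ (imp (and p q) q)
  | orI1 {Γ} {p q} : Proof Γ (imp p (or p q))
  | orI2 {Γ} {p q} : Proof Γ (imp q (or p q))
  | orE {Γ} {p q r} : Proof Γ (imp (imp p r) (imp (imp q r) (imp (or p q) r)))
  | topI {Γ} : Proof Γ top
  | botE {Γ} {p} : Proof Γ (imp bot p)
  | cimpTop {Γ} : Proof Γ (cimp top top)
  | cimpFix {Γ} {p} : Proof Γ (imp (cimp p p) p)
  | cimpMono {Γ} {p p' q q'} :
      Proof Γ (imp (imp p' p) (imp (cimp p q) (imp (imp q q') (cimp p' q'))))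

end PCL

end Contracts

/-! Two steps of the same shape prove the theorem. Assuming `b`, the contract `b ↠ a` can be
weakened to `a ↠ a` (since `a → b`), and `(a ↠ a) → a` yields `a`; hence `b → a`. Then `a ↠ b`
can be weakened to `(a ∧ b) ↠ (a ∧ b)`, using `a ∧ b → a` and `b → a ∧ b`, so `a ∧ b` holds. -/

namespace Contracts.PCL.Proof

variable {A : Type} {Γ : Set (PCL A)} {p q : PCL A}

theorem weaken {Γ' : Set (PCL A)} (h : Proof Γ p) (hs : Γ ⊆ Γ') : Proof Γ' p := by
  induction h with
  | ax h => exact .ax (hs h)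
  | mp _ _ ih1 ih2 => exact .mp ih1 ih2
  | axK => exact .axK
  | axS => exact .axS
  | andI => exact .andI
  | andE1 => exact .andE1
  | andE2 => exact .andE2
  | orI1 => exact .orI1
  | orI2 => exact .orI2
  | orE => exact .orE
  | topI => exact .topI
  | botE => exact .botE
  | cimpTop => exact .cimpTop
  | cimpFix => exact .cimpFix
  | cimpMono => exact .cimpMono

theorem imp_refl (p : PCL A) : Proof Γ (imp p p) :=
  .mp (.mp (.axS (q := imp p p)) .axK) .axK

theorem deduction (h : Proof (insert p Γ) q) : Proof Γ (imp p q) := by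
  induction h with
  | ax h =>
    rcases h with rfl | h
    · exact imp_refl _
    · exact .mp .axK (.ax h)
  | mp _ _ ih1 ih2 => exact .mp (.mp .axS ih1) ih2
  | axK => exact .mp .axK .axK
  | axS => exact .mp .axK .axS
  | andI => exact .mp .axK .andI
  | andE1 => exact .mp .axK .andE1
  | andE2 => exact .mp .axK .andE2
  | orI1 => exact .mp .axK .orI1
  | orI2 => exact .mp .axK .orI2
  | orE => exact .mp .axK .orE
  | topI => exact .mp .axK .topI
  | botE => exact .mp .axK .botE
  | cimpTop => exact .mp .axK .cimpTop
  | cimpFix => exact .mp .axK .cimpFix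
  | cimpMono => exact .mp .axK .cimpMono

theorem assumption : Proof (insert p Γ) p :=
  .ax (Set.mem_insert p Γ)

theorem and_intro (hp : Proof Γ p) (hq : Proof Γ q) : Proof Γ (and p q) :=
  .mp (.mp .andI hp) hq

theorem of_cimp_of_imp {r : PCL A} (hrp : Proof Γ (imp r p)) (hpq : Proof Γ (cimp p q))
    (hqr : Proof Γ (imp q r)) : Proof Γ r :=
  .mp .cimpFix (.mp (.mp (.mp .cimpMono hrp) hpq) hqr)

theorem and_of_cimp_of_cimp (hqp : Proof Γ (cimp q p)) (hpq : Proof Γ (cimp p q)) :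
    Proof Γ (and p q) := by
  have hq_imp_p : Proof Γ (imp q p) :=
    deduction <| of_cimp_of_imp (.mp .axK assumption) (hqp.weaken (Set.subset_insert q Γ))
      (imp_refl p)
  have hq_imp_and : Proof Γ (imp q (and p q)) :=
    deduction <| and_intro (.mp (hq_imp_p.weaken (Set.subset_insert q Γ)) assumption) assumption
  exact of_cimp_of_imp .andE1 hpq hq_imp_and

end Contracts.PCL.Proof

open Contracts

/-- Circular assume-guarantee reasoning in PCL:
`⊢ (b ↠ a) ∧ (a ↠ b) → a ∧ b`. -/
theorem pcl_circular_handshake {A : Type} (a b : A) :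
    PCL.Proof (∅ : Set (PCL A))
      (.imp (.and (.cimp (.atom b) (.atom a)) (.cimp (.atom a) (.atom b)))
            (.and (.atom a) (.atom b))) :=
  PCL.Proof.deduction <|
    PCL.Proof.and_of_cimp_of_cimp (.mp .andE1 .assumption) (.mp .andE2 .assumption)
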